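/- arXiv:2002.02323 — 2 statements merged into one kernel-verified Lean document; each statement's English description precedes it below -/
import Mathlib

section
/- If a continuous function φ : [0, R₀] → ℝ satisfies |φ(r)| ≤ (c₁/4) r² + c₂ ∫₀^r (ln r − ln s) s |φ(s)| ds for all r ∈ [0, R₀], then |φ(r)| ≤ ξ(r) for all r ∈ [0, R₀], where ξ is the unique continuous solution of the corresponding integral equation ξ(r) = (c₁/4) r² + c₂ ∫₀^r (ln r − ln s) s ξ(s) ds. -/
/-!
The difference `u = |φ| - ξ` satisfies the homogeneous inequality
`u r ≤ c₂ ∫₀^r (ln r - ln s) s u(s) ds`. The kernel is nonnegative and bounded by `r - s ≤ R₀`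
(from `ln x ≤ x - 1`), so the positive part `u⁺` satisfies `u⁺ r ≤ c₂ R₀ ∫₀^r u⁺`, and Gronwall's
lemma applied to the primitive of `u⁺` forces `u⁺ = 0`.
-/

open MeasureTheory Set

namespace Real

theorem log_sub_log_mul_nonneg {r s : ℝ} (hs : 0 ≤ s) (hsr : s ≤ r) :
    0 ≤ (log r - log s) * s := by
  rcases hs.eq_or_lt with rfl | hs
  · simp
  · exact mul_nonneg (sub_nonneg.2 (log_le_log hs hsr)) hs.le

theorem log_sub_log_mul_le_sub {r s : ℝ} (hs : 0 ≤ s) (hsr : s ≤ r) :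
    (log r - log s) * s ≤ r - s := by
  rcases hs.eq_or_lt with rfl | hs
  · simpa using hsr
  · have hr : 0 < r := hs.trans_le hsr
    calc (log r - log s) * s = log (r / s) * s := by rw [log_div hr.ne' hs.ne']
      _ ≤ (r / s - 1) * s := by gcongr; exact log_le_sub_one_of_pos (div_pos hr hs)
      _ = r - s := by field_simp

theorem continuous_log_sub_log_mul (r : ℝ) : Continuous fun s => (log r - log s) * s :=
  ((continuous_id.mul (continuous_const (y := log r))).sub continuous_mul_log).congr fun s => by
    simp only [Pi.sub_apply, Pi.mul_apply, id]; ring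

end Real

theorem hasDerivWithinAt_integral_Ici_of_continuousOn {g : ℝ → ℝ} {a b x : ℝ}
    (hg : ContinuousOn g (Icc a b)) (hx : x ∈ Ico a b) :
    HasDerivWithinAt (fun y => ∫ t in a..y, g t) (g x) (Ici x) x := by
  have hx' : x ∈ Icc a b := Ico_subset_Icc_self hx
  have : Fact (x ∈ Icc a b) := ⟨hx'⟩
  have hIcc : HasDerivWithinAt (fun y => ∫ t in a..y, g t) (g x) (Icc a b) x :=
    intervalIntegral.integral_hasDerivWithinAt_right
      (hg.mono (uIcc_subset_Icc (left_mem_Icc.2 (hx.1.trans hx.2.le)) hx')).intervalIntegrable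
      (hg.stronglyMeasurableAtFilter_nhdsWithin measurableSet_Icc x) (hg x hx')
  exact hIcc.mono_of_mem_nhdsWithin (Icc_mem_nhdsGE_of_mem hx)

theorem eq_zero_of_le_mul_integral {g : ℝ → ℝ} {a b C : ℝ} (hg : ContinuousOn g (Icc a b))
    (hg_nonneg : ∀ x ∈ Icc a b, 0 ≤ g x)
    (hle : ∀ x ∈ Icc a b, g x ≤ C * ∫ t in a..x, g t) :
    ∀ x ∈ Icc a b, g x = 0 := by
  set F : ℝ → ℝ := fun y => ∫ t in a..y, g t
  have hF_nonneg : ∀ x ∈ Icc a b, 0 ≤ F x := fun x hx =>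
    intervalIntegral.integral_nonneg hx.1 fun t ht => hg_nonneg t ⟨ht.1, ht.2.trans hx.2⟩
  have hF_cont : ContinuousOn F (Icc a b) := fun x hx => by
    rw [← uIcc_of_le (hx.1.trans hx.2)] at hg hx
    exact (intervalIntegral.continuousOn_primitive_interval hg.integrableOn_uIcc x hx).mono
      Icc_subset_uIcc
  -- Gronwall for `F' = g ≤ C F` with `F a = 0`.
  have hF_le : ∀ x ∈ Icc a b, ‖F x‖ ≤ gronwallBound 0 C 0 (x - a) :=
    norm_le_gronwallBound_of_norm_deriv_right_le hF_cont
      (fun x hx => hasDerivWithinAt_integral_Ici_of_continuousOn hg hx) (by simp [F])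
      fun x hx => by
        have hx' := Ico_subset_Icc_self hx
        rw [Real.norm_of_nonneg (hg_nonneg x hx'), Real.norm_of_nonneg (hF_nonneg x hx'), add_zero]
        exact hle x hx'
  intro x hx
  have hFx : F x = 0 := by simpa [gronwallBound_ε0_δ0] using hF_le x hx
  have hgx := hle x hx
  rw [show (∫ t in a..x, g t) = F x from rfl, hFx, mul_zero] at hgx
  exact le_antisymm hgx (hg_nonneg x hx)

theorem intervalIntegrable_mul_of_continuousOn {f v : ℝ → ℝ} {a b r : ℝ}
    (hf : ContinuousOn f (Icc a r)) (hv : ContinuousOn v (Icc a b)) (hr : r ∈ Icc a b) :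
    IntervalIntegrable (fun s => f s * v s) volume a r :=
  (hf.mul (hv.mono (Icc_subset_Icc_right hr.2))).intervalIntegrable_of_Icc hr.1

theorem nonpos_of_le_mul_integral_kernel {K : ℝ → ℝ → ℝ} {u : ℝ → ℝ} {a b c M : ℝ}
    (hc : 0 ≤ c) (hK_cont : ∀ r ∈ Icc a b, ContinuousOn (K r) (Icc a r))
    (hK : ∀ r ∈ Icc a b, ∀ s ∈ Icc a r, 0 ≤ K r s ∧ K r s ≤ M)
    (hu : ContinuousOn u (Icc a b))
    (hle : ∀ r ∈ Icc a b, u r ≤ c * ∫ s in a..r, K r s * u s) :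
    ∀ r ∈ Icc a b, u r ≤ 0 := by
  set g : ℝ → ℝ := fun s => max (u s) 0
  have hg : ContinuousOn g (Icc a b) := hu.sup continuousOn_const
  have hg_le : ∀ r ∈ Icc a b, g r ≤ c * M * ∫ s in a..r, g s := by
    intro r hr
    have hM : 0 ≤ M := by
      obtain ⟨hK0, hKM⟩ := hK r hr r (right_mem_Icc.2 hr.1)
      exact hK0.trans hKM
    have hKu_le : ∫ s in a..r, K r s * u s ≤ M * ∫ s in a..r, g s := by
      rw [← intervalIntegral.integral_const_mul]
      refine intervalIntegral.integral_mono_on hr.1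
        (intervalIntegrable_mul_of_continuousOn (hK_cont r hr) hu hr)
        (intervalIntegrable_mul_of_continuousOn continuousOn_const hg hr) fun s hs => ?_
      obtain ⟨hK0, hKM⟩ := hK r hr s hs
      calc K r s * u s ≤ K r s * g s := mul_le_mul_of_nonneg_left (le_max_left _ _) hK0
        _ ≤ M * g s := mul_le_mul_of_nonneg_right hKM (le_max_right _ _)
    have hg_int_nonneg : 0 ≤ ∫ s in a..r, g s :=
      intervalIntegral.integral_nonneg hr.1 fun s _ => le_max_right _ _
    rw [mul_assoc]
    exact max_le ((hle r hr).trans (mul_le_mul_of_nonneg_left hKu_le hc))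
      (mul_nonneg hc (mul_nonneg hM hg_int_nonneg))
  intro r hr
  have := eq_zero_of_le_mul_integral hg (fun s _ => le_max_right _ _) hg_le r hr
  exact (le_max_left _ _).trans this.le

theorem volterra_comparison_general
    (R₀ c₁ c₂ : ℝ) (hc₂ : 0 < c₂)
    (φ ξ : ℝ → ℝ)
    (hφ : ContinuousOn φ (Set.Icc 0 R₀))
    (hξ : ContinuousOn ξ (Set.Icc 0 R₀))
    (hξeq : ∀ r ∈ Set.Icc 0 R₀,
      ξ r = c₁/4 * r^2 + c₂ * ∫ s in (0:ℝ)..r, (Real.log r - Real.log s) * s * ξ s)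
    (hφineq : ∀ r ∈ Set.Icc 0 R₀,
      |φ r| ≤ c₁/4 * r^2 + c₂ * ∫ s in (0:ℝ)..r, (Real.log r - Real.log s) * s * |φ s|) :
    ∀ r ∈ Set.Icc 0 R₀, |φ r| ≤ ξ r := by
  have hK_cont : ∀ r ∈ Icc (0 : ℝ) R₀,
      ContinuousOn (fun s => (Real.log r - Real.log s) * s) (Icc 0 r) := fun r _ =>
    (Real.continuous_log_sub_log_mul r).continuousOn
  have hK : ∀ r ∈ Icc (0 : ℝ) R₀, ∀ s ∈ Icc 0 r,
      0 ≤ (Real.log r - Real.log s) * s ∧ (Real.log r - Real.log s) * s ≤ R₀ := by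
    intro r hr s hs
    exact ⟨Real.log_sub_log_mul_nonneg hs.1 hs.2,
      (Real.log_sub_log_mul_le_sub hs.1 hs.2).trans (by linarith [hs.1, hr.2])⟩
  have hle : ∀ r ∈ Icc (0 : ℝ) R₀,
      |φ r| - ξ r ≤ c₂ * ∫ s in (0:ℝ)..r, (Real.log r - Real.log s) * s * (|φ s| - ξ s) := by
    intro r hr
    simp only [mul_sub]
    rw [intervalIntegral.integral_sub
      (intervalIntegrable_mul_of_continuousOn (hK_cont r hr) hφ.abs hr)
      (intervalIntegrable_mul_of_continuousOn (hK_cont r hr) hξ hr), mul_sub]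
    linarith [hφineq r hr, hξeq r hr]
  intro r hr
  exact sub_nonpos.1
    (nonpos_of_le_mul_integral_kernel hc₂.le hK_cont hK (hφ.abs.sub hξ) hle r hr)

theorem volterra_comparison
    (R₀ c₁ c₂ : ℝ) (hR₀ : 0 < R₀) (hc₁ : 0 < c₁) (hc₂ : 0 < c₂)
    (φ ξ : ℝ → ℝ)
    (hφ : ContinuousOn φ (Set.Icc 0 R₀))
    (hξ : ContinuousOn ξ (Set.Icc 0 R₀))
    (hξeq : ∀ r ∈ Set.Icc 0 R₀,
      ξ r = c₁/4 * r^2 + c₂ * ∫ s in (0:ℝ)..r, (Real.log r - Real.log s) * s * ξ s)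
    (hφineq : ∀ r ∈ Set.Icc 0 R₀,
      |φ r| ≤ c₁/4 * r^2 + c₂ * ∫ s in (0:ℝ)..r, (Real.log r - Real.log s) * s * |φ s|) :
    ∀ r ∈ Set.Icc 0 R₀, |φ r| ≤ ξ r :=
  volterra_comparison_general R₀ c₁ c₂ hc₂ φ ξ hφ hξ hξeq hφineq
end

section
/- Define recursively x_0 = 0 and x_{k+1}(r) = ∫₀^r (1/s) ∫₀^s σ (c₁ + c₂ x_k(σ)) dσ ds for continuous functions on [0, R₀]. Then for every k ∈ ℕ and r ∈ [0, R₀], x_k(r) ≤ Σ_{j=1}^k c₁ c₂^{j−1} r^{2j}/(4^j (j!)²); in particular x_k(r) ≤ ξ(r) = Σ_{j=1}^∞ c₁ c₂^{j−1} r^{2j}/(4^j (j!)²) for all k. -/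
/-!
Every Picard iterate is an even polynomial, and the operator
`f ↦ ∫₀^r (1/s) ∫₀^s σ f(σ) dσ ds` sends `σ^m` to `r^(m+2)/(m+2)^2`. Hence `x_k` is exactly the
`k`-th partial sum of the series for `ξ`, whose terms are nonnegative and dominated by the
exponential series.
-/

open MeasureTheory Finset Nat

section PolynomialIntegrals

variable {ι : Type*} (t : Finset ι) (b : ι → ℝ) (e : ι → ℕ)

theorem integral_sum_mul_pow (r : ℝ) :
    ∫ s in (0:ℝ)..r, ∑ i ∈ t, b i * s ^ e i = ∑ i ∈ t, b i * r ^ (e i + 1) / (e i + 1) := by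
  rw [intervalIntegral.integral_finsetSum fun i _ =>
    (by fun_prop : Continuous _).intervalIntegrable _ _]
  refine Finset.sum_congr rfl fun i _ => ?_
  rw [intervalIntegral.integral_const_mul, integral_pow, zero_pow (succ_ne_zero _), sub_zero]
  ring

theorem integral_inv_mul_integral_mul_sum_pow (r : ℝ) :
    ∫ s in (0:ℝ)..r, (1 / s) * ∫ σ in (0:ℝ)..s, σ * ∑ i ∈ t, b i * σ ^ e i
      = ∑ i ∈ t, b i / ((e i : ℝ) + 2) ^ 2 * r ^ (e i + 2) := by
  have inner (s : ℝ) : (1 / s) * ∫ σ in (0:ℝ)..s, σ * ∑ i ∈ t, b i * σ ^ e i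
      = ∑ i ∈ t, b i / ((e i : ℝ) + 2) * s ^ (e i + 1) := by
    have hσ (σ : ℝ) : σ * ∑ i ∈ t, b i * σ ^ e i = ∑ i ∈ t, b i * σ ^ (e i + 1) := by
      rw [Finset.mul_sum]
      exact Finset.sum_congr rfl fun i _ => by ring
    simp_rw [hσ, integral_sum_mul_pow, Finset.mul_sum]
    refine Finset.sum_congr rfl fun i _ => ?_
    rcases eq_or_ne s 0 with rfl | hs
    · simp
    · push_cast
      field_simp
      ring
  simp_rw [inner, integral_sum_mul_pow]
  refine Finset.sum_congr rfl fun i _ => ?_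
  push_cast
  field_simp
  ring

end PolynomialIntegrals

/-- The coefficient of `r ^ (2 * (j + 1))` in `ξ`. -/
noncomputable def picardCoeff (c₁ c₂ : ℝ) (j : ℕ) : ℝ :=
  c₁ * c₂ ^ j / (4 ^ (j + 1) * ((j + 1)! : ℝ) ^ 2)

theorem picardCoeff_nonneg {c₁ c₂ : ℝ} (hc₁ : 0 ≤ c₁) (hc₂ : 0 ≤ c₂) (j : ℕ) :
    0 ≤ picardCoeff c₁ c₂ j := by
  unfold picardCoeff
  positivity

theorem picardCoeff_succ (c₁ c₂ : ℝ) (j : ℕ) :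
    picardCoeff c₁ c₂ (j + 1) = c₂ * picardCoeff c₁ c₂ j / (2 * j + 4) ^ 2 := by
  unfold picardCoeff
  rw [factorial_succ (j + 1)]
  push_cast
  field_simp
  ring

/-- The integrand `c₁ + c₂ x_k` as an even polynomial, with coefficients chosen so that the
double integral of its `j`-th monomial is the `j`-th term of `x_{k+1}`. -/
theorem const_add_mul_sum_picardCoeff (c₁ c₂ σ : ℝ) (k : ℕ) :
    c₁ + c₂ * ∑ j ∈ range k, picardCoeff c₁ c₂ j * σ ^ (2 * (j + 1))
      = ∑ j ∈ range (k + 1), (((2 * j : ℕ) : ℝ) + 2) ^ 2 * picardCoeff c₁ c₂ j * σ ^ (2 * j) := by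
  rw [sum_range_succ', Finset.mul_sum, add_comm]
  congr 1
  · refine Finset.sum_congr rfl fun j _ => ?_
    rw [picardCoeff_succ]
    push_cast
    field_simp
    ring
  · simp [picardCoeff]
    ring

theorem picard_iterate_eq_sum {c₁ c₂ : ℝ} {x : ℕ → ℝ → ℝ} (h0 : ∀ r : ℝ, x 0 r = 0)
    (hrec : ∀ (k : ℕ) (r : ℝ),
      x (k+1) r = ∫ s in (0:ℝ)..r, (1/s) * ∫ σ in (0:ℝ)..s, σ * (c₁ + c₂ * x k σ))
    (k : ℕ) (r : ℝ) : x k r = ∑ j ∈ range k, picardCoeff c₁ c₂ j * r ^ (2 * (j + 1)) := by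
  induction k generalizing r with
  | zero => simp [h0]
  | succ k ih =>
    simp_rw [hrec, ih, const_add_mul_sum_picardCoeff, integral_inv_mul_integral_mul_sum_pow]
    refine Finset.sum_congr rfl fun j _ => ?_
    rw [mul_div_cancel_left₀ _ (by positivity)]
    rfl

theorem summable_pow_div_factorial_succ_sq (y : ℝ) :
    Summable fun n : ℕ => y ^ n / ((n + 1)! : ℝ) ^ 2 := by
  refine .of_norm_bounded (Real.summable_pow_div_factorial |y|) fun n => ?_
  rw [norm_div, norm_pow, Real.norm_eq_abs, norm_pow, Real.norm_natCast]
  have hfac : (n ! : ℝ) ≤ ((n + 1)! : ℝ) ^ 2 := by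
    exact_mod_cast (factorial_le n.le_succ).trans (Nat.le_self_pow two_ne_zero _)
  gcongr

theorem summable_picardCoeff_mul_pow (c₁ c₂ r : ℝ) :
    Summable fun j => picardCoeff c₁ c₂ j * r ^ (2 * (j + 1)) := by
  have hterm (j : ℕ) : picardCoeff c₁ c₂ j * r ^ (2 * (j + 1))
      = c₁ * r ^ 2 / 4 * ((c₂ * r ^ 2 / 4) ^ j / ((j + 1)! : ℝ) ^ 2) := by
    unfold picardCoeff
    rw [pow_mul, pow_succ (r ^ 2), pow_succ (4 : ℝ), div_pow, mul_pow]
    field_simp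
  simp_rw [hterm]
  exact (summable_pow_div_factorial_succ_sq _).mul_left _

theorem picard_iterates_bounded_general
    (R₀ c₁ c₂ : ℝ) (hc₁ : 0 < c₁) (hc₂ : 0 < c₂)
    (x : ℕ → ℝ → ℝ)
    (h0 : ∀ r : ℝ, x 0 r = 0)
    (hrec : ∀ (k : ℕ) (r : ℝ),
      x (k+1) r = ∫ s in (0:ℝ)..r, (1/s) * ∫ σ in (0:ℝ)..s, σ * (c₁ + c₂ * x k σ)) :
    ∀ k : ℕ, ∀ r ∈ Set.Icc (0:ℝ) R₀,
      x k r ≤ ∑ j ∈ Finset.range k,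
        c₁ * c₂ ^ j / (4 ^ (j+1) * ((Nat.factorial (j+1) : ℝ))^2) * r ^ (2*(j+1)) ∧
      x k r ≤ ∑' j : ℕ,
        c₁ * c₂ ^ j / (4 ^ (j+1) * ((Nat.factorial (j+1) : ℝ))^2) * r ^ (2*(j+1)) := by
  intro k r _
  have hx : x k r = ∑ j ∈ range k, picardCoeff c₁ c₂ j * r ^ (2 * (j + 1)) :=
    picard_iterate_eq_sum h0 hrec k r
  have hterm_nonneg (j : ℕ) : 0 ≤ picardCoeff c₁ c₂ j * r ^ (2 * (j + 1)) :=
    mul_nonneg (picardCoeff_nonneg hc₁.le hc₂.le j) ((even_two_mul _).pow_nonneg r)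
  exact ⟨hx.le, hx.le.trans <|
    (summable_picardCoeff_mul_pow c₁ c₂ r).sum_le_tsum _ fun j _ => hterm_nonneg j⟩

theorem picard_iterates_bounded
    (R₀ c₁ c₂ : ℝ) (hR₀ : 0 < R₀) (hc₁ : 0 < c₁) (hc₂ : 0 < c₂)
    (x : ℕ → ℝ → ℝ)
    (h0 : ∀ r : ℝ, x 0 r = 0)
    (hrec : ∀ (k : ℕ) (r : ℝ),
      x (k+1) r = ∫ s in (0:ℝ)..r, (1/s) * ∫ σ in (0:ℝ)..s, σ * (c₁ + c₂ * x k σ)) :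
    ∀ k : ℕ, ∀ r ∈ Set.Icc (0:ℝ) R₀,
      x k r ≤ ∑ j ∈ Finset.range k,
        c₁ * c₂ ^ j / (4 ^ (j+1) * ((Nat.factorial (j+1) : ℝ))^2) * r ^ (2*(j+1)) ∧
      x k r ≤ ∑' j : ℕ,
        c₁ * c₂ ^ j / (4 ^ (j+1) * ((Nat.factorial (j+1) : ℝ))^2) * r ^ (2*(j+1)) :=
  picard_iterates_bounded_general R₀ c₁ c₂ hc₁ hc₂ x h0 hrec
end
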